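/- arXiv:2506.08831 — 3 statements merged into one kernel-verified Lean document; each statement's English description precedes it below -/
import Mathlib

section
/- Let δ > 7/2. Then there is a constant C (depending only on δ) such that for all x, y ∈ ℝ⁴ with x ≠ y: ∫_{ℝ⁴} ⟨x₁⟩^{−δ} · ( |x − x₁|^{−3} + |x − x₁|^{−3/2} ) · ( |x₁ − y|^{−3} + |x₁ − y|^{−3/2} ) dx₁ ≤ C·( |x − y|^{−3} + |x − y|^{−3/2} ). -/
open MeasureTheory Metric Set ENNReal

local notation "E4" => EuclideanSpace ℝ (Fin 4)

-- dyadic annuli lemma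
lemma ball_sing (s : ℝ) (hs0 : 0 < s) (hs4 : s < 4) :
    ∫⁻ u : E4 in ball 0 2, ENNReal.ofReal (‖u‖ ^ (-s)) < ∞ := by
  set V := volume (ball (0:E4) 1) with hVdef
  have hV : V < ∞ := measure_ball_lt_top
  set A : ℕ → Set E4 := fun k => ball 0 (2*(1/2:ℝ)^k) \ ball 0 ((1/2:ℝ)^k) with hA
  have hq0 : (0:ℝ) ≤ (2:ℝ) ^ (s-4) := Real.rpow_nonneg (by norm_num) _
  have hq1 : ENNReal.ofReal ((2:ℝ) ^ (s-4)) < 1 := by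
    rw [ENNReal.ofReal_lt_one]
    exact Real.rpow_lt_one_of_one_lt_of_neg one_lt_two (by linarith)
  have hcover : ball (0:E4) 2 ⊆ {0} ∪ ⋃ k, A k := by
    intro u hu
    rcases eq_or_ne u 0 with h | h
    · exact Or.inl (by simp [h])
    refine Or.inr (mem_iUnion.2 ?_)
    have hu0 : 0 < ‖u‖ := norm_pos_iff.2 h
    have hu2 : ‖u‖ < 2 := by simpa using mem_ball_zero_iff.1 hu
    have hex : ∃ n : ℕ, (1/2:ℝ)^n ≤ ‖u‖ :=
      (exists_pow_lt_of_lt_one hu0 (by norm_num)).imp fun n h => h.le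
    refine ⟨Nat.find hex, ?_, ?_⟩
    · rw [mem_ball_zero_iff]
      rcases Nat.eq_zero_or_pos (Nat.find hex) with h0 | h0
      · rw [h0]; simpa using hu2
      · obtain ⟨m, hm⟩ := Nat.exists_eq_succ_of_ne_zero h0.ne'
        have := Nat.find_min hex (m := m) (by omega)
        push_neg at this
        rw [hm]
        calc ‖u‖ < (1/2:ℝ)^m := this
          _ = 2*(1/2:ℝ)^(m+1) := by ring
    · rw [mem_ball_zero_iff]; push_neg; exact Nat.find_spec hex
  calc ∫⁻ u : E4 in ball 0 2, ENNReal.ofReal (‖u‖ ^ (-s))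
      ≤ ∫⁻ u : E4 in {0} ∪ ⋃ k, A k, ENNReal.ofReal (‖u‖ ^ (-s)) :=
        lintegral_mono_set hcover
    _ ≤ (∫⁻ u : E4 in {(0:E4)}, ENNReal.ofReal (‖u‖ ^ (-s)))
        + ∫⁻ u : E4 in ⋃ k, A k, ENNReal.ofReal (‖u‖ ^ (-s)) := lintegral_union_le _ _ _
    _ ≤ 0 + ∑' k, ∫⁻ u : E4 in A k, ENNReal.ofReal (‖u‖ ^ (-s)) := by
        gcongr
        · rw [setLIntegral_measure_zero _ _ (measure_singleton 0)]
        · exact lintegral_iUnion_le _ _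
    _ ≤ 0 + ∑' k, (16 * ENNReal.ofReal ((2:ℝ)^(s-4)) ^ k) * V := by
        gcongr with k
        have hb : ∀ u ∈ A k, ENNReal.ofReal (‖u‖ ^ (-s))
            ≤ ENNReal.ofReal (((1/2:ℝ)^k) ^ (-s)) := by
          intro u hu
          apply ENNReal.ofReal_le_ofReal
          exact Real.rpow_le_rpow_of_nonpos (by positivity)
            (by simpa [mem_ball_zero_iff, not_lt] using hu.2) (by linarith)
        calc ∫⁻ u : E4 in A k, ENNReal.ofReal (‖u‖ ^ (-s))
            ≤ ∫⁻ _ : E4 in A k, ENNReal.ofReal (((1/2:ℝ)^k) ^ (-s)) :=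
              setLIntegral_mono' (measurableSet_ball.diff measurableSet_ball) hb
          _ = ENNReal.ofReal (((1/2:ℝ)^k) ^ (-s)) * volume (A k) := setLIntegral_const _ _
          _ ≤ ENNReal.ofReal (((1/2:ℝ)^k) ^ (-s)) * (ENNReal.ofReal ((2*(1/2:ℝ)^k)^(4:ℕ)) * V) := by
              gcongr
              have := Measure.addHaar_ball (volume : Measure E4) 0
                (r := 2*(1/2:ℝ)^k) (by positivity)
              rw [finrank_euclideanSpace_fin] at this
              exact le_of_le_of_eq (measure_mono diff_subset) this
          _ = (16 * ENNReal.ofReal ((2:ℝ)^(s-4)) ^ k) * V := by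
              rw [← mul_assoc, ← ENNReal.ofReal_mul (by positivity)]
              congr 1
              have h12 : ((1/2:ℝ))^k = (2:ℝ) ^ (-(k:ℝ)) := by
                rw [Real.rpow_neg (by norm_num), Real.rpow_natCast]
                simp [one_div, inv_pow]
              rw [← ENNReal.ofReal_pow (by positivity), ← ENNReal.ofReal_ofNat,
                ← ENNReal.ofReal_mul (by norm_num)]
              congr 1
              rw [h12, ← Real.rpow_natCast ((2:ℝ)^(s-4)) k, ← Real.rpow_mul (by norm_num),
                ← Real.rpow_mul (by norm_num), ← Real.rpow_natCast (2*(2:ℝ)^(-(k:ℝ))) 4]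
              rw [show (2:ℝ)*(2:ℝ)^(-(k:ℝ)) = (2:ℝ)^(1-(k:ℝ)) by
                rw [show (1:ℝ)-(k:ℝ) = 1 + -(k:ℝ) by ring,
                  Real.rpow_add (by norm_num), Real.rpow_one]]
              rw [← Real.rpow_mul (by norm_num), ← Real.rpow_add (by norm_num),
                show (16:ℝ) = (2:ℝ)^(4:ℝ) by norm_num, ← Real.rpow_add (by norm_num)]
              ring_nf
    _ < ∞ := by
        rw [zero_add, ENNReal.tsum_mul_right, ENNReal.tsum_mul_left, ENNReal.tsum_geometric]
        refine ENNReal.mul_lt_top (ENNReal.mul_lt_top (by norm_num) ?_) hV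
        exact ENNReal.inv_lt_top.2 (tsub_pos_of_lt hq1)

-- Young-type pointwise inequality
lemma young_ab {a b : ℝ} (ha : 0 ≤ a) (hb : 0 ≤ b) :
    a * b ≤ a ^ ((3:ℝ)/2) + b ^ (3:ℕ) := by
  rcases le_or_gt a (b^2) with h | h
  · have : a * b ≤ b^2 * b := mul_le_mul_of_nonneg_right h hb
    calc a * b ≤ b^2*b := this
      _ = b^(3:ℕ) := by ring
      _ ≤ _ := le_add_of_nonneg_left (Real.rpow_nonneg ha _)
  · have ha0 : 0 < a := lt_of_le_of_lt (sq_nonneg b) h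
    have hbs : b ≤ Real.sqrt a := by
      rw [show b = Real.sqrt (b^2) by rw [Real.sqrt_sq hb]]
      exact Real.sqrt_le_sqrt h.le
    have : a * b ≤ a * Real.sqrt a := mul_le_mul_of_nonneg_left hbs ha0.le
    calc a * b ≤ a * Real.sqrt a := this
      _ = a ^ ((3:ℝ)/2) := by
          rw [show (3:ℝ)/2 = 1 + 1/2 by norm_num, Real.rpow_add ha0, Real.rpow_one,
            ← Real.sqrt_eq_rpow]
      _ ≤ _ := le_add_of_nonneg_right (by positivity)

-- measurability
lemma meas_kk (z : EuclideanSpace ℝ (Fin 4)) (s : ℝ) :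
    Measurable fun x₁ : EuclideanSpace ℝ (Fin 4) => ‖z - x₁‖ ^ s := by
  fun_prop

-- the key uniform lemma
lemma key_unif (δ : ℝ) (hδ : 7/2 < δ) :
    ∃ M : ℝ≥0∞, M ≠ ∞ ∧ ∀ z : EuclideanSpace ℝ (Fin 4),
      (∫⁻ x₁, ENNReal.ofReal (Real.sqrt (1 + ‖x₁‖ ^ 2) ^ (-δ) *
        (‖z - x₁‖ ^ (-(3:ℝ)) + ‖z - x₁‖ ^ (-(3/2:ℝ))))) ≤ M := by
  classical
  set r₂ : ℝ := 3/2*δ with hr₂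
  have hr₂4 : (4:ℝ) < r₂ := by rw [hr₂]; linarith
  have hr₂0 : (0:ℝ) < r₂ := by linarith
  -- the three pieces
  set M₁ : ℝ≥0∞ := ∫⁻ u : EuclideanSpace ℝ (Fin 4) in closedBall 0 1,
      ENNReal.ofReal (‖u‖ ^ (-(3:ℝ)) + ‖u‖ ^ (-(3/2:ℝ))) with hM₁
  set M₂ : ℝ≥0∞ := ∫⁻ x₁ : EuclideanSpace ℝ (Fin 4),
      ENNReal.ofReal (2 * Real.sqrt (1 + ‖x₁‖ ^ 2) ^ (-r₂)) with hM₂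
  set M₃ : ℝ≥0∞ := ∫⁻ u : EuclideanSpace ℝ (Fin 4),
      ENNReal.ofReal (2 * ((2:ℝ) ^ ((9:ℝ)/2) * (1 + ‖u‖) ^ (-((9:ℝ)/2)))) with hM₃
  have hfin4 : (Module.finrank ℝ (EuclideanSpace ℝ (Fin 4)) : ℝ) = 4 := by
    rw [finrank_euclideanSpace_fin]; norm_num
  have hM₁fin : M₁ < ∞ := by
    have hsub : closedBall (0:EuclideanSpace ℝ (Fin 4)) 1 ⊆ ball 0 2 := by
      intro u hu
      rw [mem_closedBall_zero_iff] at hu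
      rw [mem_ball_zero_iff]; linarith
    calc M₁ ≤ ∫⁻ u : EuclideanSpace ℝ (Fin 4) in ball 0 2,
          ENNReal.ofReal (‖u‖ ^ (-(3:ℝ)) + ‖u‖ ^ (-(3/2:ℝ))) := lintegral_mono_set hsub
      _ = (∫⁻ u : EuclideanSpace ℝ (Fin 4) in ball 0 2, ENNReal.ofReal (‖u‖ ^ (-(3:ℝ))))
          + ∫⁻ u : EuclideanSpace ℝ (Fin 4) in ball 0 2, ENNReal.ofReal (‖u‖ ^ (-(3/2:ℝ))) := by
          rw [← lintegral_add_left (by fun_prop)]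
          congr 1 with u
          rw [← ENNReal.ofReal_add (by positivity) (by positivity)]
      _ < ∞ := ENNReal.add_lt_top.2
          ⟨ball_sing 3 (by norm_num) (by norm_num),
           ball_sing (3/2) (by norm_num) (by norm_num)⟩
  have hM₂fin : M₂ < ∞ := by
    have hpt : ∀ x₁ : EuclideanSpace ℝ (Fin 4),
        ENNReal.ofReal (2 * Real.sqrt (1 + ‖x₁‖ ^ 2) ^ (-r₂))
          ≤ ENNReal.ofReal (2 * (2:ℝ)^(r₂/2)) * ENNReal.ofReal ((1 + ‖x₁‖) ^ (-r₂)) := by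
      intro x₁
      rw [← ENNReal.ofReal_mul (by positivity)]
      apply ENNReal.ofReal_le_ofReal
      have h1 : Real.sqrt (1 + ‖x₁‖ ^ 2) ^ (-r₂) = (1 + ‖x₁‖ ^ 2) ^ (-r₂/2) :=
        (Real.rpow_div_two_eq_sqrt _ (by positivity)).symm
      rw [h1, mul_assoc]
      exact mul_le_mul_of_nonneg_left (rpow_neg_one_add_norm_sq_le x₁ hr₂0) (by norm_num)
    calc M₂ ≤ ∫⁻ x₁ : EuclideanSpace ℝ (Fin 4),
          ENNReal.ofReal (2 * (2:ℝ)^(r₂/2)) * ENNReal.ofReal ((1 + ‖x₁‖) ^ (-r₂)) :=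
          lintegral_mono hpt
      _ = ENNReal.ofReal (2 * (2:ℝ)^(r₂/2)) * ∫⁻ x₁ : EuclideanSpace ℝ (Fin 4),
          ENNReal.ofReal ((1 + ‖x₁‖) ^ (-r₂)) := lintegral_const_mul' _ _ ENNReal.ofReal_ne_top
      _ < ∞ := ENNReal.mul_lt_top ENNReal.ofReal_lt_top
          (finite_integral_one_add_norm (by rw [hfin4]; exact hr₂4))
  have hM₃fin : M₃ < ∞ := by
    rw [hM₃]
    simp_rw [← mul_assoc, ENNReal.ofReal_mul (by positivity : (0:ℝ) ≤ 2 * (2:ℝ)^((9:ℝ)/2))]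
    rw [lintegral_const_mul' _ _ ENNReal.ofReal_ne_top]
    exact ENNReal.mul_lt_top ENNReal.ofReal_lt_top
      (finite_integral_one_add_norm (by rw [hfin4]; norm_num))
  refine ⟨M₁ + M₂ + M₃, by simp [hM₁fin.ne, hM₂fin.ne, hM₃fin.ne], fun z => ?_⟩
  -- pointwise bound
  set F₁ : EuclideanSpace ℝ (Fin 4) → ℝ≥0∞ := fun x₁ =>
    (closedBall z 1).indicator
      (fun x₁ => ENNReal.ofReal (‖z - x₁‖ ^ (-(3:ℝ)) + ‖z - x₁‖ ^ (-(3/2:ℝ)))) x₁ with hF₁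
  set F₂ : EuclideanSpace ℝ (Fin 4) → ℝ≥0∞ := fun x₁ =>
    ENNReal.ofReal (2 * Real.sqrt (1 + ‖x₁‖ ^ 2) ^ (-r₂)) with hF₂
  set F₃ : EuclideanSpace ℝ (Fin 4) → ℝ≥0∞ := fun x₁ =>
    ENNReal.ofReal (2 * ((2:ℝ) ^ ((9:ℝ)/2) * (1 + ‖z - x₁‖) ^ (-((9:ℝ)/2)))) with hF₃
  have hw0 : ∀ x₁ : EuclideanSpace ℝ (Fin 4), 0 ≤ Real.sqrt (1 + ‖x₁‖ ^ 2) ^ (-δ) :=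
    fun x₁ => Real.rpow_nonneg (Real.sqrt_nonneg _) _
  have hw1 : ∀ x₁ : EuclideanSpace ℝ (Fin 4), Real.sqrt (1 + ‖x₁‖ ^ 2) ^ (-δ) ≤ 1 := by
    intro x₁
    apply Real.rpow_le_one_of_one_le_of_nonpos _ (by linarith)
    have h1 : (1:ℝ) ≤ 1 + ‖x₁‖^2 := by nlinarith [sq_nonneg ‖x₁‖]
    calc (1:ℝ) = Real.sqrt 1 := by simp
      _ ≤ Real.sqrt (1 + ‖x₁‖^2) := Real.sqrt_le_sqrt h1
  have hpt : ∀ x₁, ENNReal.ofReal (Real.sqrt (1 + ‖x₁‖ ^ 2) ^ (-δ) *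
      (‖z - x₁‖ ^ (-(3:ℝ)) + ‖z - x₁‖ ^ (-(3/2:ℝ)))) ≤ F₁ x₁ + (F₂ x₁ + F₃ x₁) := by
    intro x₁
    by_cases hc : ‖z - x₁‖ ≤ 1
    · refine le_trans ?_ le_self_add
      rw [hF₁]
      have hmem : x₁ ∈ closedBall z 1 := by
        rw [mem_closedBall, dist_comm, dist_eq_norm]; exact hc
      simp only [Set.indicator_of_mem hmem]
      apply ENNReal.ofReal_le_ofReal
      have hnn : (0:ℝ) ≤ ‖z - x₁‖ ^ (-(3:ℝ)) + ‖z - x₁‖ ^ (-(3/2:ℝ)) := by positivity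
      have := mul_le_mul_of_nonneg_right (hw1 x₁) hnn
      simpa using this
    · push_neg at hc
      refine le_trans ?_ le_add_self
      set t := ‖z - x₁‖ with ht
      set a := Real.sqrt (1 + ‖x₁‖ ^ 2) ^ (-δ) with ha
      have ht1 : (1:ℝ) < t := hc
      have ht0 : (0:ℝ) < t := by linarith
      have h1 : t ^ (-(3:ℝ)) ≤ t ^ (-(3/2:ℝ)) :=
        Real.rpow_le_rpow_of_exponent_le ht1.le (by norm_num)
      have h2 : a * (t ^ (-(3:ℝ)) + t ^ (-(3/2:ℝ))) ≤ 2 * (a * t ^ (-(3/2:ℝ))) := by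
        have := hw0 x₁
        nlinarith [Real.rpow_nonneg ht0.le (-(3/2:ℝ))]
      have h3 : a * t ^ (-(3/2:ℝ)) ≤ a ^ ((3:ℝ)/2) + (t ^ (-(3/2:ℝ)))^(3:ℕ) :=
        young_ab (hw0 x₁) (by positivity)
      have h4 : a ^ ((3:ℝ)/2) = Real.sqrt (1 + ‖x₁‖ ^ 2) ^ (-r₂) := by
        rw [ha, ← Real.rpow_mul (Real.sqrt_nonneg _)]
        congr 1; rw [hr₂]; ring
      have h5 : (t ^ (-(3/2:ℝ)))^(3:ℕ) ≤ (2:ℝ) ^ ((9:ℝ)/2) * (1 + t) ^ (-((9:ℝ)/2)) := by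
        have e1 : (t ^ (-(3/2:ℝ)))^(3:ℕ) = t ^ (-((9:ℝ)/2)) := by
          rw [← Real.rpow_natCast (t ^ (-(3/2:ℝ))) 3, ← Real.rpow_mul ht0.le]
          norm_num
        have e2 : t ^ (-((9:ℝ)/2)) ≤ ((1+t)/2) ^ (-((9:ℝ)/2)) := by
          apply Real.rpow_le_rpow_of_nonpos (by linarith) (by linarith) (by norm_num)
        have e3 : ((1+t)/2) ^ (-((9:ℝ)/2)) = (2:ℝ)^((9:ℝ)/2) * (1+t) ^ (-((9:ℝ)/2)) := by
          rw [Real.div_rpow (by linarith) (by norm_num), Real.rpow_neg (by linarith),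
            Real.rpow_neg (by norm_num : (0:ℝ) ≤ 2), div_eq_mul_inv, inv_inv]
          ring
        rw [e1]; rw [e3] at e2; exact e2
      calc ENNReal.ofReal (a * (t ^ (-(3:ℝ)) + t ^ (-(3/2:ℝ))))
          ≤ ENNReal.ofReal (2 * (Real.sqrt (1 + ‖x₁‖ ^ 2) ^ (-r₂)
            + (2:ℝ) ^ ((9:ℝ)/2) * (1 + t) ^ (-((9:ℝ)/2)))) := by
            apply ENNReal.ofReal_le_ofReal
            calc a * (t ^ (-(3:ℝ)) + t ^ (-(3/2:ℝ))) ≤ 2 * (a * t ^ (-(3/2:ℝ))) := h2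
              _ ≤ _ := by
                  apply mul_le_mul_of_nonneg_left _ (by norm_num)
                  calc a * t ^ (-(3/2:ℝ)) ≤ a ^ ((3:ℝ)/2) + (t ^ (-(3/2:ℝ)))^(3:ℕ) := h3
                    _ ≤ _ := by rw [h4]; exact add_le_add_right h5 _
        _ = F₂ x₁ + F₃ x₁ := by
            rw [hF₂, hF₃, ← ENNReal.ofReal_add (by positivity) (by positivity)]
            congr 1; ring
  -- measurability of the pieces
  have hmF₁ : Measurable F₁ := by
    apply Measurable.indicator _ measurableSet_closedBall
    fun_prop
  have hmF₂ : Measurable F₂ := by fun_prop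
  -- integrate
  have hsplit : (∫⁻ x₁, ENNReal.ofReal (Real.sqrt (1 + ‖x₁‖ ^ 2) ^ (-δ) *
      (‖z - x₁‖ ^ (-(3:ℝ)) + ‖z - x₁‖ ^ (-(3/2:ℝ)))))
      ≤ (∫⁻ x₁, F₁ x₁) + ((∫⁻ x₁, F₂ x₁) + ∫⁻ x₁, F₃ x₁) := by
    calc _ ≤ ∫⁻ x₁, (F₁ x₁ + (F₂ x₁ + F₃ x₁)) := lintegral_mono hpt
      _ = _ := by rw [lintegral_add_left hmF₁, lintegral_add_left hmF₂]
  refine hsplit.trans ?_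
  -- translation invariance
  have hmp : MeasurePreserving (fun x₁ : EuclideanSpace ℝ (Fin 4) => z - x₁) volume volume :=
    Measure.measurePreserving_sub_left volume z
  set G₁ : EuclideanSpace ℝ (Fin 4) → ℝ≥0∞ := fun u =>
    (closedBall (0:EuclideanSpace ℝ (Fin 4)) 1).indicator
      (fun u => ENNReal.ofReal (‖u‖ ^ (-(3:ℝ)) + ‖u‖ ^ (-(3/2:ℝ)))) u with hG₁
  have hmG : Measurable (fun u : EuclideanSpace ℝ (Fin 4) =>
      ENNReal.ofReal (‖u‖ ^ (-(3:ℝ)) + ‖u‖ ^ (-(3/2:ℝ)))) := by fun_prop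
  have hmG₁ : Measurable G₁ := hmG.indicator measurableSet_closedBall
  have hI₁ : (∫⁻ x₁, F₁ x₁) = M₁ := by
    have h0 : ∀ x₁, F₁ x₁ = G₁ (z - x₁) := by
      intro x₁
      simp only [hF₁, hG₁, Set.indicator]
      have hiff : x₁ ∈ closedBall z 1 ↔ z - x₁ ∈ closedBall (0:EuclideanSpace ℝ (Fin 4)) 1 := by
        rw [mem_closedBall, mem_closedBall_zero_iff, dist_comm, dist_eq_norm]
      by_cases h : x₁ ∈ closedBall z 1
      · rw [if_pos h, if_pos (hiff.1 h)]
      · rw [if_neg h, if_neg (fun hh => h (hiff.2 hh))]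
    calc (∫⁻ x₁, F₁ x₁) = ∫⁻ x₁, G₁ (z - x₁) := by simp_rw [h0]
      _ = ∫⁻ u, G₁ u := hmp.lintegral_comp hmG₁
      _ = M₁ := by rw [hG₁, lintegral_indicator measurableSet_closedBall, hM₁]
  have hI₃ : (∫⁻ x₁, F₃ x₁) = M₃ := by
    calc (∫⁻ x₁, F₃ x₁)
        = ∫⁻ u, ENNReal.ofReal (2 * ((2:ℝ) ^ ((9:ℝ)/2) * (1 + ‖u‖) ^ (-((9:ℝ)/2)))) :=
          hmp.lintegral_comp (f := fun u : EuclideanSpace ℝ (Fin 4) =>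
            ENNReal.ofReal (2 * ((2:ℝ) ^ ((9:ℝ)/2) * (1 + ‖u‖) ^ (-((9:ℝ)/2))))) (by fun_prop)
      _ = M₃ := hM₃.symm
  rw [hI₁, hI₃, ← add_assoc, ← hM₂]

lemma kmono {r t : ℝ} (hr : 0 < r) (h2 : r ≤ 2*t) :
    t ^ (-(3:ℝ)) + t ^ (-(3/2:ℝ)) ≤ 8 * (r ^ (-(3:ℝ)) + r ^ (-(3/2:ℝ))) := by
  have ht0 : 0 < t := by linarith
  have hhalf : r/2 ≤ t := by linarith
  have key : ∀ a:ℝ, (r/2) ^ (-a) = 2^a * r ^ (-a) := by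
    intro a
    rw [Real.div_rpow hr.le (by norm_num : (0:ℝ) ≤ 2),
      Real.rpow_neg (by norm_num : (0:ℝ) ≤ 2), div_eq_mul_inv, inv_inv, mul_comm]
  have h3 : t ^ (-(3:ℝ)) ≤ 8 * r ^ (-(3:ℝ)) := by
    have ha := Real.rpow_le_rpow_of_nonpos (half_pos hr) hhalf (by norm_num : -(3:ℝ) ≤ 0)
    have he : (2:ℝ) ^ (3:ℝ) = 8 := by
      rw [show (3:ℝ) = ((3:ℕ):ℝ) by norm_num, Real.rpow_natCast]; norm_num
    calc t ^ (-(3:ℝ)) ≤ (r/2) ^ (-(3:ℝ)) := ha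
      _ = 8 * r ^ (-(3:ℝ)) := by rw [key 3, he]
  have h32 : t ^ (-(3/2:ℝ)) ≤ 8 * r ^ (-(3/2:ℝ)) := by
    have ha := Real.rpow_le_rpow_of_nonpos (half_pos hr) hhalf (by norm_num : -(3/2:ℝ) ≤ 0)
    have he : (2:ℝ) ^ ((3:ℝ)/2) ≤ 8 := by
      calc (2:ℝ) ^ ((3:ℝ)/2) ≤ (2:ℝ) ^ (3:ℝ) :=
            Real.rpow_le_rpow_of_exponent_le one_le_two (by norm_num)
        _ = 8 := by rw [show (3:ℝ) = ((3:ℕ):ℝ) by norm_num, Real.rpow_natCast]; norm_num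
    calc t ^ (-(3/2:ℝ)) ≤ (r/2) ^ (-(3/2:ℝ)) := ha
      _ = (2:ℝ)^((3:ℝ)/2) * r ^ (-(3/2:ℝ)) := by rw [show -(3/2:ℝ) = -((3:ℝ)/2) by norm_num, key]
      _ ≤ 8 * r ^ (-(3/2:ℝ)) := by
          apply mul_le_mul_of_nonneg_right he (by positivity)
  calc t ^ (-(3:ℝ)) + t ^ (-(3/2:ℝ)) ≤ 8 * r ^ (-(3:ℝ)) + 8 * r ^ (-(3/2:ℝ)) := add_le_add h3 h32
    _ = 8 * (r ^ (-(3:ℝ)) + r ^ (-(3/2:ℝ))) := by ring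

theorem stmt16 (δ : ℝ) (hδ : 7/2 < δ) :
    ∃ C : ℝ, 0 < C ∧ ∀ x y : EuclideanSpace ℝ (Fin 4), x ≠ y →
      (∫⁻ x₁, ENNReal.ofReal
          (Real.sqrt (1 + ‖x₁‖ ^ 2) ^ (-δ) *
            (‖x - x₁‖ ^ (-(3 : ℝ)) + ‖x - x₁‖ ^ (-(3/2 : ℝ))) *
            (‖x₁ - y‖ ^ (-(3 : ℝ)) + ‖x₁ - y‖ ^ (-(3/2 : ℝ)))))
        ≤ ENNReal.ofReal (C * (‖x - y‖ ^ (-(3 : ℝ)) + ‖x - y‖ ^ (-(3/2 : ℝ)))) := by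
  obtain ⟨M, hMfin, hM⟩ := key_unif δ hδ
  have hMr0 : 0 ≤ M.toReal := ENNReal.toReal_nonneg
  refine ⟨16 * M.toReal + 1, by positivity, fun x y hxy => ?_⟩
  set r := ‖x - y‖ with hrdef
  have hr0 : 0 < r := norm_pos_iff.2 (sub_ne_zero.2 hxy)
  set KR := r ^ (-(3:ℝ)) + r ^ (-(3/2:ℝ)) with hKR
  have hKR0 : (0:ℝ) ≤ KR := by positivity
  set g₁ : EuclideanSpace ℝ (Fin 4) → ℝ≥0∞ := fun x₁ =>
    ENNReal.ofReal (8 * KR * (Real.sqrt (1 + ‖x₁‖ ^ 2) ^ (-δ) *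
      (‖x - x₁‖ ^ (-(3:ℝ)) + ‖x - x₁‖ ^ (-(3/2:ℝ))))) with hg₁
  set g₂ : EuclideanSpace ℝ (Fin 4) → ℝ≥0∞ := fun x₁ =>
    ENNReal.ofReal (8 * KR * (Real.sqrt (1 + ‖x₁‖ ^ 2) ^ (-δ) *
      (‖y - x₁‖ ^ (-(3:ℝ)) + ‖y - x₁‖ ^ (-(3/2:ℝ))))) with hg₂
  have hpt : ∀ x₁ : EuclideanSpace ℝ (Fin 4), ENNReal.ofReal
      (Real.sqrt (1 + ‖x₁‖ ^ 2) ^ (-δ) *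
        (‖x - x₁‖ ^ (-(3 : ℝ)) + ‖x - x₁‖ ^ (-(3/2 : ℝ))) *
        (‖x₁ - y‖ ^ (-(3 : ℝ)) + ‖x₁ - y‖ ^ (-(3/2 : ℝ)))) ≤ g₁ x₁ + g₂ x₁ := by
    intro x₁
    set w := Real.sqrt (1 + ‖x₁‖ ^ 2) ^ (-δ) with hw
    have hw0 : 0 ≤ w := Real.rpow_nonneg (Real.sqrt_nonneg _) _
    set A := ‖x - x₁‖ ^ (-(3:ℝ)) + ‖x - x₁‖ ^ (-(3/2:ℝ)) with hA
    set B := ‖x₁ - y‖ ^ (-(3:ℝ)) + ‖x₁ - y‖ ^ (-(3/2:ℝ)) with hB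
    have hA0 : 0 ≤ A := by positivity
    have hB0 : 0 ≤ B := by positivity
    have htri : r ≤ ‖x - x₁‖ + ‖x₁ - y‖ := by
      calc r = ‖(x - x₁) + (x₁ - y)‖ := by rw [sub_add_sub_cancel]
        _ ≤ ‖x - x₁‖ + ‖x₁ - y‖ := norm_add_le _ _
    rcases le_total ‖x - x₁‖ ‖x₁ - y‖ with hc | hc
    · have h2 : r ≤ 2 * ‖x₁ - y‖ := by linarith
      have hbd : B ≤ 8 * KR := kmono hr0 h2
      refine le_trans ?_ le_self_add
      rw [hg₁]
      apply ENNReal.ofReal_le_ofReal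
      calc w * A * B ≤ (w * A) * (8 * KR) :=
          mul_le_mul_of_nonneg_left hbd (by positivity)
        _ = 8 * KR * (w * A) := by ring
    · have h2 : r ≤ 2 * ‖x - x₁‖ := by linarith
      have hbd : A ≤ 8 * KR := kmono hr0 h2
      refine le_trans ?_ le_add_self
      rw [hg₂]
      apply ENNReal.ofReal_le_ofReal
      have hBr : B = ‖y - x₁‖ ^ (-(3:ℝ)) + ‖y - x₁‖ ^ (-(3/2:ℝ)) := by
        rw [hB, norm_sub_rev]
      calc w * A * B = (w * B) * A := by ring
        _ ≤ (w * B) * (8 * KR) := mul_le_mul_of_nonneg_left hbd (by positivity)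
        _ = 8 * KR * (w * B) := by ring
        _ = 8 * KR * (w * (‖y - x₁‖ ^ (-(3:ℝ)) + ‖y - x₁‖ ^ (-(3/2:ℝ)))) := by rw [hBr]
  have hmg₁ : Measurable g₁ := by rw [hg₁]; fun_prop
  have step : (∫⁻ x₁, ENNReal.ofReal
      (Real.sqrt (1 + ‖x₁‖ ^ 2) ^ (-δ) *
        (‖x - x₁‖ ^ (-(3 : ℝ)) + ‖x - x₁‖ ^ (-(3/2 : ℝ))) *
        (‖x₁ - y‖ ^ (-(3 : ℝ)) + ‖x₁ - y‖ ^ (-(3/2 : ℝ)))))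
      ≤ (∫⁻ x₁, g₁ x₁) + ∫⁻ x₁, g₂ x₁ := by
    calc _ ≤ ∫⁻ x₁, (g₁ x₁ + g₂ x₁) := lintegral_mono hpt
      _ = _ := lintegral_add_left hmg₁ _
  have hint₁ : (∫⁻ x₁, g₁ x₁) ≤ ENNReal.ofReal (8 * KR) * M := by
    have : ∀ x₁, g₁ x₁ = ENNReal.ofReal (8 * KR) * ENNReal.ofReal
        (Real.sqrt (1 + ‖x₁‖ ^ 2) ^ (-δ) *
          (‖x - x₁‖ ^ (-(3:ℝ)) + ‖x - x₁‖ ^ (-(3/2:ℝ)))) := by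
      intro x₁
      rw [← ENNReal.ofReal_mul (by positivity : (0:ℝ) ≤ 8 * KR)]
    simp_rw [this]
    rw [lintegral_const_mul' _ _ ENNReal.ofReal_ne_top]
    exact mul_le_mul_right (hM x) _
  have hint₂ : (∫⁻ x₁, g₂ x₁) ≤ ENNReal.ofReal (8 * KR) * M := by
    have : ∀ x₁, g₂ x₁ = ENNReal.ofReal (8 * KR) * ENNReal.ofReal
        (Real.sqrt (1 + ‖x₁‖ ^ 2) ^ (-δ) *
          (‖y - x₁‖ ^ (-(3:ℝ)) + ‖y - x₁‖ ^ (-(3/2:ℝ)))) := by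
      intro x₁
      rw [← ENNReal.ofReal_mul (by positivity : (0:ℝ) ≤ 8 * KR)]
    simp_rw [this]
    rw [lintegral_const_mul' _ _ ENNReal.ofReal_ne_top]
    exact mul_le_mul_right (hM y) _
  refine step.trans ?_
  calc (∫⁻ x₁, g₁ x₁) + ∫⁻ x₁, g₂ x₁
      ≤ ENNReal.ofReal (8 * KR) * M + ENNReal.ofReal (8 * KR) * M := add_le_add hint₁ hint₂
    _ = ENNReal.ofReal (8 * KR) * ENNReal.ofReal M.toReal
        + ENNReal.ofReal (8 * KR) * ENNReal.ofReal M.toReal := by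
        rw [ENNReal.ofReal_toReal hMfin]
    _ = ENNReal.ofReal (8 * KR * M.toReal + 8 * KR * M.toReal) := by
        rw [← ENNReal.ofReal_mul (by positivity), ← ENNReal.ofReal_add (by positivity) (by positivity)]
    _ ≤ ENNReal.ofReal ((16 * M.toReal + 1) * KR) := by
        apply ENNReal.ofReal_le_ofReal
        nlinarith
end

section
/- Let γ > 2. Then there is a constant C (depending only on γ) such that for every x ∈ ℝ⁴: ∫_{ℝ⁴} ⟨z⟩^{−2γ} · |x − z|^{−1} dz ≤ C·⟨x⟩^{−1}. -/
open MeasureTheory Metric Set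
open scoped ENNReal


-- ball integral of ‖w‖^{-1} in ℝ⁴
lemma stmt17_ball_lint (R : ℝ) (hR : 0 < R) :
    ∫⁻ w in ball (0 : EuclideanSpace ℝ (Fin 4)) R, ENNReal.ofReal (‖w‖ ^ (-(1:ℝ)))
      ≤ ENNReal.ofReal (R ^ 3) * volume (ball (0 : EuclideanSpace ℝ (Fin 4)) 1) * 2 := by
  set E := EuclideanSpace ℝ (Fin 4)
  set v := volume (ball (0 : E) 1) with hv
  have hv_ne : v ≠ ∞ := measure_ball_lt_top.ne
  have hlayer := lintegral_eq_lintegral_meas_le (volume.restrict (ball (0 : E) R))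
    (f := fun w => ‖w‖ ^ (-(1:ℝ)))
    (Filter.Eventually.of_forall fun w => Real.rpow_nonneg (norm_nonneg _) _)
    ((show Measurable fun w : EuclideanSpace ℝ (Fin 4) => ‖w‖ ^ (-(1:ℝ)) by fun_prop).aemeasurable)
  rw [show (∫⁻ w in ball (0 : E) R, ENNReal.ofReal (‖w‖ ^ (-(1:ℝ)))) =
      ∫⁻ w, ENNReal.ofReal (‖w‖ ^ (-(1:ℝ))) ∂(volume.restrict (ball (0 : E) R)) from rfl, hlayer]
  have hfr : Module.finrank ℝ E = 4 := finrank_euclideanSpace_fin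
  calc ∫⁻ t in Ioi 0, (volume.restrict (ball (0 : E) R)) {a : E | t ≤ ‖a‖ ^ (-(1:ℝ))}
      ≤ ∫⁻ t in Ioc 0 R⁻¹ ∪ Ioi R⁻¹, (volume.restrict (ball (0 : E) R)) {a : E | t ≤ ‖a‖ ^ (-(1:ℝ))} :=
        lintegral_mono_set Ioi_subset_Ioc_union_Ioi
    _ ≤ (∫⁻ t in Ioc 0 R⁻¹, (volume.restrict (ball (0 : E) R)) {a : E | t ≤ ‖a‖ ^ (-(1:ℝ))})
        + ∫⁻ t in Ioi R⁻¹, (volume.restrict (ball (0 : E) R)) {a : E | t ≤ ‖a‖ ^ (-(1:ℝ))} :=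
        lintegral_union_le _ _ _
    _ ≤ ENNReal.ofReal (R ^ 3) * v + ENNReal.ofReal (R ^ 3) * v := by
        gcongr
        · -- small t piece
          calc ∫⁻ t in Ioc 0 R⁻¹, (volume.restrict (ball (0 : E) R)) {a : E | t ≤ ‖a‖ ^ (-(1:ℝ))}
              ≤ ∫⁻ _t in Ioc 0 R⁻¹, (ENNReal.ofReal (R ^ 4) * v) := by
                apply setLIntegral_mono' measurableSet_Ioc
                intro t _
                calc (volume.restrict (ball (0 : E) R)) {a : E | t ≤ ‖a‖ ^ (-(1:ℝ))}
                    ≤ (volume.restrict (ball (0 : E) R)) univ := measure_mono (subset_univ _)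
                  _ = volume (ball (0 : E) R) := by
                      rw [Measure.restrict_apply' measurableSet_ball, univ_inter]
                  _ = ENNReal.ofReal (R ^ 4) * v := by
                      rw [Measure.addHaar_ball volume _ hR.le, hfr]
            _ = (ENNReal.ofReal (R ^ 4) * v) * ENNReal.ofReal R⁻¹ := by
                rw [setLIntegral_const, Real.volume_Ioc, sub_zero]
            _ = ENNReal.ofReal (R ^ 4) * ENNReal.ofReal R⁻¹ * v := by ring
            _ = ENNReal.ofReal (R ^ 3) * v := by
                rw [← ENNReal.ofReal_mul (by positivity)]
                congr 1
                field_simp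
        · -- large t piece
          calc ∫⁻ t in Ioi R⁻¹, (volume.restrict (ball (0 : E) R)) {a : E | t ≤ ‖a‖ ^ (-(1:ℝ))}
              ≤ ∫⁻ t in Ioi R⁻¹, ENNReal.ofReal (t ^ (-(4:ℝ))) * v := by
                apply setLIntegral_mono' measurableSet_Ioi
                intro t ht
                have ht0 : 0 < t := lt_trans (by positivity) ht
                have hsub : {a : E | t ≤ ‖a‖ ^ (-(1:ℝ))} ⊆ closedBall (0 : E) t⁻¹ := by
                  intro a ha
                  simp only [mem_setOf_eq] at ha
                  have hna : a ≠ 0 := by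
                    intro h
                    rw [h] at ha
                    simp only [norm_zero] at ha
                    rw [Real.zero_rpow (by norm_num)] at ha
                    linarith
                  have hn0 : (0:ℝ) < ‖a‖ := norm_pos_iff.mpr hna
                  rw [Real.rpow_neg_one] at ha
                  rw [mem_closedBall_zero_iff]
                  rw [le_inv_comm₀ ht0 hn0] at ha
                  exact ha
                calc (volume.restrict (ball (0 : E) R)) {a : E | t ≤ ‖a‖ ^ (-(1:ℝ))}
                    ≤ volume {a : E | t ≤ ‖a‖ ^ (-(1:ℝ))} := Measure.restrict_le_self _
                  _ ≤ volume (closedBall (0 : E) t⁻¹) := measure_mono hsub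
                  _ = ENNReal.ofReal (t⁻¹ ^ 4) * v := by
                      rw [Measure.addHaar_closedBall volume _ (by positivity), hfr]
                  _ = ENNReal.ofReal (t ^ (-(4:ℝ))) * v := by
                      congr 2
                      rw [← Real.rpow_natCast t⁻¹ 4, Real.inv_rpow ht0.le, ← Real.rpow_neg ht0.le]
                      norm_num
            _ = (∫⁻ t in Ioi R⁻¹, ENNReal.ofReal (t ^ (-(4:ℝ)))) * v :=
                lintegral_mul_const' v _ hv_ne
            _ ≤ ENNReal.ofReal (R ^ 3) * v := by
                gcongr
                have hc : (0:ℝ) < R⁻¹ := by positivity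
                have hint : IntegrableOn (fun t : ℝ => t ^ (-(4:ℝ))) (Ioi R⁻¹) :=
                  integrableOn_Ioi_rpow_of_lt (by norm_num) hc
                have hnn : 0 ≤ᵐ[volume.restrict (Ioi R⁻¹)] fun t : ℝ => t ^ (-(4:ℝ)) := by
                  filter_upwards [ae_restrict_mem measurableSet_Ioi] with t ht
                  exact Real.rpow_nonneg (le_of_lt (lt_trans hc ht)) _
                rw [← ofReal_integral_eq_lintegral_ofReal hint hnn]
                rw [integral_Ioi_rpow_of_lt (by norm_num) hc]
                apply ENNReal.ofReal_le_ofReal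
                have h1 : (R⁻¹ : ℝ) ^ (-(4:ℝ) + 1) = R ^ (3:ℕ) := by
                  rw [show (-(4:ℝ) + 1) = -(3:ℝ) by norm_num, Real.rpow_neg (by positivity),
                    Real.inv_rpow hR.le, inv_inv]
                  rw [← Real.rpow_natCast]
                  norm_num
                rw [h1, show (-(4:ℝ) + 1) = -(3:ℝ) by norm_num]
                have h3 : (0:ℝ) < R ^ 3 := pow_pos hR 3
                linarith
    _ = ENNReal.ofReal (R ^ 3) * v * 2 := by ring


lemma stmt17_M_lt_top {γ : ℝ} (hγ : 2 < γ) :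
    (∫⁻ z : EuclideanSpace ℝ (Fin 4),
      ENNReal.ofReal (Real.sqrt (1 + ‖z‖ ^ 2) ^ (-(2 * γ)))) < ⊤ := by
  have hpt : ∀ z : EuclideanSpace ℝ (Fin 4),
      Real.sqrt (1 + ‖z‖ ^ 2) ^ (-(2 * γ))
        ≤ 2 ^ ((2*γ)/2) * (1 + ‖z‖) ^ (-(2*γ)) := by
    intro z
    have h1 : Real.sqrt (1 + ‖z‖ ^ 2) ^ (-(2 * γ))
        = ((1:ℝ) + ‖z‖ ^ 2) ^ (-(2*γ)/2) := by
      rw [Real.sqrt_eq_rpow, ← Real.rpow_mul (by positivity)]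
      ring_nf
    rw [h1]
    exact rpow_neg_one_add_norm_sq_le z (by linarith)
  calc (∫⁻ z : EuclideanSpace ℝ (Fin 4),
        ENNReal.ofReal (Real.sqrt (1 + ‖z‖ ^ 2) ^ (-(2 * γ))))
      ≤ ∫⁻ z : EuclideanSpace ℝ (Fin 4),
        ENNReal.ofReal (2 ^ ((2*γ)/2)) * ENNReal.ofReal ((1 + ‖z‖) ^ (-(2*γ))) := by
        apply lintegral_mono
        intro z
        simp only []
        rw [← ENNReal.ofReal_mul (by positivity)]
        exact ENNReal.ofReal_le_ofReal (hpt z)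
    _ = ENNReal.ofReal (2 ^ ((2*γ)/2)) *
        ∫⁻ z : EuclideanSpace ℝ (Fin 4), ENNReal.ofReal ((1 + ‖z‖) ^ (-(2*γ))) :=
        lintegral_const_mul' _ _ ENNReal.ofReal_ne_top
    _ < ⊤ := by
        apply ENNReal.mul_lt_top ENNReal.ofReal_lt_top
        apply finite_integral_one_add_norm
        rw [finrank_euclideanSpace_fin]
        norm_num
        linarith

lemma stmt17_bracket_lower {x z : EuclideanSpace ℝ (Fin 4)}
    (h : ‖x - z‖ < Real.sqrt (1 + ‖x‖ ^ 2) / 4) :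
    Real.sqrt (1 + ‖x‖ ^ 2) / 4 ≤ Real.sqrt (1 + ‖z‖ ^ 2) := by
  set s := Real.sqrt (1 + ‖x‖ ^ 2) with hsdef
  set u := Real.sqrt (1 + ‖z‖ ^ 2) with hudef
  have hs0 : 0 ≤ s := Real.sqrt_nonneg _
  have hu1 : 1 ≤ u := Real.one_le_sqrt.mpr (by nlinarith [sq_nonneg ‖z‖])
  have hs2 : s ^ 2 = 1 + ‖x‖ ^ 2 := Real.sq_sqrt (by positivity)
  have hu2 : u ^ 2 = 1 + ‖z‖ ^ 2 := Real.sq_sqrt (by positivity)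
  rcases le_or_gt s 4 with hs | hs
  · linarith
  · -- s > 4, so ‖x‖ is large
    have hxn : ‖x‖ - ‖z‖ ≤ ‖x - z‖ := norm_sub_norm_le x z
    have hxs : s ≤ 2 * ‖x‖ := by
      nlinarith [norm_nonneg x]
    have hzu : ‖z‖ ≤ u := by
      nlinarith [norm_nonneg z]
    nlinarith [norm_nonneg z, norm_nonneg x]

theorem stmt17 (γ : ℝ) (hγ : 2 < γ) :
    ∃ C : ℝ, 0 < C ∧ ∀ x : EuclideanSpace ℝ (Fin 4),
      (∫⁻ z, ENNReal.ofReal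
          (Real.sqrt (1 + ‖z‖ ^ 2) ^ (-(2 * γ)) * ‖x - z‖ ^ (-(1 : ℝ))))
        ≤ ENNReal.ofReal (C * Real.sqrt (1 + ‖x‖ ^ 2) ^ (-(1 : ℝ))) := by
  classical
  set M := ∫⁻ z : EuclideanSpace ℝ (Fin 4),
    ENNReal.ofReal (Real.sqrt (1 + ‖z‖ ^ 2) ^ (-(2 * γ))) with hMdef
  have hM : M < ⊤ := stmt17_M_lt_top hγ
  set v := volume (ball (0 : EuclideanSpace ℝ (Fin 4)) 1) with hvdef
  have hv : v < ⊤ := measure_ball_lt_top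
  refine ⟨4 * M.toReal + 4 ^ (2*γ) * (2 * v.toReal) / 64 + 1, by positivity, fun x => ?_⟩
  set s := Real.sqrt (1 + ‖x‖ ^ 2) with hsdef
  have hs1 : (1:ℝ) ≤ s := Real.one_le_sqrt.mpr (by nlinarith [sq_nonneg ‖x‖])
  have hs0 : (0:ℝ) < s := by linarith
  set R := s / 4 with hRdef
  have hR : 0 < R := by positivity
  set F := fun z : EuclideanSpace ℝ (Fin 4) =>
    ENNReal.ofReal (Real.sqrt (1 + ‖z‖ ^ 2) ^ (-(2 * γ)) * ‖x - z‖ ^ (-(1:ℝ))) with hFdef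
  have hsplit := lintegral_add_compl (μ := volume) F (measurableSet_ball (x := x) (ε := R))
  -- pointwise bound on the ball
  have hBpt : ∀ z ∈ ball x R, F z ≤ ENNReal.ofReal (4 ^ (2*γ) * s ^ (-(4:ℝ)))
      * ENNReal.ofReal (‖x - z‖ ^ (-(1:ℝ))) := by
    intro z hz
    have hz' : ‖x - z‖ < R := by
      rw [mem_ball, dist_eq_norm] at hz
      rwa [norm_sub_rev]
    have hlow : R ≤ Real.sqrt (1 + ‖z‖ ^ 2) := stmt17_bracket_lower hz'
    have ha : Real.sqrt (1 + ‖z‖ ^ 2) ^ (-(2 * γ)) ≤ 4 ^ (2*γ) * s ^ (-(4:ℝ)) := by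
      calc Real.sqrt (1 + ‖z‖ ^ 2) ^ (-(2 * γ)) ≤ R ^ (-(2*γ)) :=
            Real.rpow_le_rpow_of_nonpos hR hlow (by linarith)
        _ = 4 ^ (2*γ) * s ^ (-(2*γ)) := by
            rw [hRdef, Real.div_rpow hs0.le (by norm_num : (0:ℝ) ≤ 4), div_eq_mul_inv,
              ← Real.rpow_neg (by norm_num : (0:ℝ) ≤ 4), neg_neg, mul_comm]
        _ ≤ 4 ^ (2*γ) * s ^ (-(4:ℝ)) :=
            mul_le_mul_of_nonneg_left
              (Real.rpow_le_rpow_of_exponent_le hs1 (by linarith))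
              (Real.rpow_nonneg (by norm_num) _)
    rw [hFdef]
    simp only []
    rw [ENNReal.ofReal_mul (by positivity)]
    exact mul_le_mul_left (ENNReal.ofReal_le_ofReal ha) _
  have hB : ∫⁻ z in ball x R, F z
      ≤ ENNReal.ofReal (4 ^ (2*γ) * (2 * v.toReal) / 64 * s ^ (-(1:ℝ))) := by
    calc ∫⁻ z in ball x R, F z
        ≤ ∫⁻ z in ball x R, ENNReal.ofReal (4 ^ (2*γ) * s ^ (-(4:ℝ)))
            * ENNReal.ofReal (‖x - z‖ ^ (-(1:ℝ))) :=
          setLIntegral_mono' measurableSet_ball hBpt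
      _ = ENNReal.ofReal (4 ^ (2*γ) * s ^ (-(4:ℝ)))
            * ∫⁻ z in ball x R, ENNReal.ofReal (‖x - z‖ ^ (-(1:ℝ))) :=
          lintegral_const_mul' _ _ ENNReal.ofReal_ne_top
      _ = ENNReal.ofReal (4 ^ (2*γ) * s ^ (-(4:ℝ)))
            * ∫⁻ w in ball (0 : EuclideanSpace ℝ (Fin 4)) R,
                ENNReal.ofReal (‖w‖ ^ (-(1:ℝ))) := by
          congr 1
          rw [← lintegral_indicator measurableSet_ball, ← lintegral_indicator measurableSet_ball]
          have key : ∀ z : EuclideanSpace ℝ (Fin 4),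
              (ball x R).indicator (fun z => ENNReal.ofReal (‖x - z‖ ^ (-(1:ℝ)))) z
              = (ball (0 : EuclideanSpace ℝ (Fin 4)) R).indicator
                  (fun w => ENNReal.ofReal (‖w‖ ^ (-(1:ℝ)))) (z - x) := by
            intro z
            by_cases hz : z ∈ ball x R
            · rw [indicator_of_mem hz, indicator_of_mem
                (by rw [mem_ball_zero_iff]; rw [mem_ball, dist_eq_norm] at hz; exact hz)]
              rw [norm_sub_rev]
            · rw [indicator_of_notMem hz, indicator_of_notMem
                (by rw [mem_ball_zero_iff]; rw [mem_ball, dist_eq_norm] at hz; exact hz)]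
          simp_rw [key, sub_eq_add_neg]
          exact lintegral_add_right_eq_self _ (-x)
      _ ≤ ENNReal.ofReal (4 ^ (2*γ) * s ^ (-(4:ℝ))) * (ENNReal.ofReal (R ^ 3) * v * 2) := by
          gcongr
          exact stmt17_ball_lint R hR
      _ = ENNReal.ofReal (4 ^ (2*γ) * s ^ (-(4:ℝ)))
            * (ENNReal.ofReal (R ^ 3) * ENNReal.ofReal v.toReal * ENNReal.ofReal (2:ℝ)) := by
          rw [ENNReal.ofReal_toReal hv.ne]
          norm_num
      _ = ENNReal.ofReal (4 ^ (2*γ) * s ^ (-(4:ℝ)) * (R ^ 3 * v.toReal * 2)) := by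
          rw [← ENNReal.ofReal_mul (by positivity), ← ENNReal.ofReal_mul (by positivity),
            ← ENNReal.ofReal_mul (by positivity)]
      _ = ENNReal.ofReal (4 ^ (2*γ) * (2 * v.toReal) / 64 * s ^ (-(1:ℝ))) := by
          congr 1
          have h4 : s ^ (-(4:ℝ)) = (s ^ (4:ℕ))⁻¹ := by
            rw [Real.rpow_neg hs0.le, ← Real.rpow_natCast s 4]
            norm_num
          have h1 : s ^ (-(1:ℝ)) = s⁻¹ := Real.rpow_neg_one s
          rw [h4, h1, hRdef]
          field_simp
          ring
  -- pointwise bound off the ball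
  have hApt : ∀ z ∈ (ball x R)ᶜ, F z ≤ ENNReal.ofReal (4 * s ^ (-(1:ℝ)))
      * ENNReal.ofReal (Real.sqrt (1 + ‖z‖ ^ 2) ^ (-(2 * γ))) := by
    intro z hz
    have hz' : R ≤ ‖x - z‖ := by
      rw [mem_compl_iff, mem_ball, dist_eq_norm, not_lt] at hz
      rwa [norm_sub_rev]
    have h1 : (0:ℝ) < ‖x - z‖ := lt_of_lt_of_le hR hz'
    have hb : ‖x - z‖ ^ (-(1:ℝ)) ≤ 4 * s ^ (-(1:ℝ)) := by
      rw [Real.rpow_neg_one, Real.rpow_neg_one]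
      calc ‖x - z‖⁻¹ ≤ R⁻¹ := by gcongr
        _ = 4 * s⁻¹ := by rw [hRdef]; field_simp
    rw [hFdef]
    simp only []
    rw [ENNReal.ofReal_mul (by positivity), mul_comm]
    exact mul_le_mul_left (ENNReal.ofReal_le_ofReal hb) _
  have hA : ∫⁻ z in (ball x R)ᶜ, F z ≤ ENNReal.ofReal (4 * M.toReal * s ^ (-(1:ℝ))) := by
    calc ∫⁻ z in (ball x R)ᶜ, F z
        ≤ ∫⁻ z in (ball x R)ᶜ, ENNReal.ofReal (4 * s ^ (-(1:ℝ)))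
            * ENNReal.ofReal (Real.sqrt (1 + ‖z‖ ^ 2) ^ (-(2 * γ))) :=
          setLIntegral_mono' measurableSet_ball.compl hApt
      _ ≤ ∫⁻ z, ENNReal.ofReal (4 * s ^ (-(1:ℝ)))
            * ENNReal.ofReal (Real.sqrt (1 + ‖z‖ ^ 2) ^ (-(2 * γ))) :=
          setLIntegral_le_lintegral _ _
      _ = ENNReal.ofReal (4 * s ^ (-(1:ℝ))) * M :=
          lintegral_const_mul' _ _ ENNReal.ofReal_ne_top
      _ = ENNReal.ofReal (4 * s ^ (-(1:ℝ))) * ENNReal.ofReal M.toReal := by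
          rw [ENNReal.ofReal_toReal hM.ne]
      _ = ENNReal.ofReal (4 * M.toReal * s ^ (-(1:ℝ))) := by
          rw [← ENNReal.ofReal_mul (by positivity)]
          congr 1
          ring
  calc (∫⁻ z, F z) = (∫⁻ z in ball x R, F z) + ∫⁻ z in (ball x R)ᶜ, F z := hsplit.symm
    _ ≤ ENNReal.ofReal (4 ^ (2*γ) * (2 * v.toReal) / 64 * s ^ (-(1:ℝ)))
        + ENNReal.ofReal (4 * M.toReal * s ^ (-(1:ℝ))) := add_le_add hB hA
    _ ≤ ENNReal.ofReal ((4 * M.toReal + 4 ^ (2*γ) * (2 * v.toReal) / 64 + 1) * s ^ (-(1:ℝ))) := by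
        rw [← ENNReal.ofReal_add (by positivity) (by positivity)]
        apply ENNReal.ofReal_le_ofReal
        have hsp : (0:ℝ) < s ^ (-(1:ℝ)) := by positivity
        nlinarith
end

section
/- Let δ > 7/2. Then there is a constant C (depending only on δ) such that for all x, y ∈ ℝ⁴ with x ≠ y, both of the following hold: ∫_{ℝ⁴} ⟨x₁⟩^{−δ} · |x − x₁|^{−3} · |x₁ − y|^{−2} dx₁ ≤ C·|x − y|^{−2}, and ∫_{ℝ⁴} ⟨x₁⟩^{−δ} · |x − x₁|^{−3/2} · |x₁ − y|^{−1/2} dx₁ ≤ C·|x − y|^{−1/2}. -/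
open MeasureTheory Real Set Metric
open scoped ENNReal NNReal

noncomputable section

namespace Stmt19Aux

abbrev E4 := EuclideanSpace ℝ (Fin 4)

lemma one_le_sq (u : E4) : 1 ≤ Real.sqrt (1 + ‖u‖ ^ 2) :=
  Real.one_le_sqrt.2 (by nlinarith [sq_nonneg ‖u‖])

lemma norm_le_sq (u : E4) : ‖u‖ ≤ Real.sqrt (1 + ‖u‖ ^ 2) :=
  (Real.le_sqrt (norm_nonneg u) (by positivity)).2 (by nlinarith)

lemma meas1 (δ β : ℝ) (z : E4) :
    Measurable fun u : E4 =>
      ENNReal.ofReal (Real.sqrt (1 + ‖u‖ ^ 2) ^ (-δ) * ‖z - u‖ ^ (-β)) := by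
  fun_prop

lemma meas0 (δ β : ℝ) :
    Measurable fun u : E4 =>
      ENNReal.ofReal (Real.sqrt (1 + ‖u‖ ^ 2) ^ (-δ) * ‖u‖ ^ (-β)) := by
  fun_prop

/-- Integrability of the singular power near the origin. -/
lemma ball_int {β : ℝ} (hβ0 : 0 < β) (hβ4 : β < 4) :
    ∫⁻ u : E4 in ball (0:E4) 1, ENNReal.ofReal (‖u‖ ^ (-β)) < ⊤ := by
  have mble : AEMeasurable (fun u : E4 => ‖u‖ ^ (-β))
      (volume.restrict (ball (0:E4) 1)) :=
    by fun_prop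
  rw [lintegral_eq_lintegral_meas_lt _
    (Filter.Eventually.of_forall fun u => Real.rpow_nonneg (norm_nonneg u) _) mble]
  have hsplit : Ioi (0:ℝ) = Ioc (0:ℝ) 1 ∪ Ioi 1 := (Ioc_union_Ioi_eq_Ioi zero_le_one).symm
  rw [hsplit, lintegral_union measurableSet_Ioi Ioc_disjoint_Ioi_same]
  have hV : volume (ball (0:E4) 1) < ⊤ := measure_ball_lt_top
  apply ENNReal.add_lt_top.2
  constructor
  · calc ∫⁻ t in Ioc (0:ℝ) 1, (volume.restrict (ball (0:E4) 1)) {a | t < ‖a‖ ^ (-β)}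
        ≤ ∫⁻ _t in Ioc (0:ℝ) 1, volume (ball (0:E4) 1) := by
          apply setLIntegral_mono measurable_const
          intro t _
          rw [Measure.restrict_apply' measurableSet_ball]
          exact measure_mono inter_subset_right
      _ = volume (ball (0:E4) 1) * volume (Ioc (0:ℝ) 1) := setLIntegral_const _ _
      _ < ⊤ := by
          rw [Real.volume_Ioc]
          exact ENNReal.mul_lt_top hV (by simp)
  · have key : ∀ t ∈ Ioi (1:ℝ), (volume.restrict (ball (0:E4) 1)) {a | t < ‖a‖ ^ (-β)}
        ≤ ENNReal.ofReal (t ^ (-(4/β))) * volume (ball (0:E4) 1) := by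
      intro t ht
      have ht0 : (0:ℝ) < t := lt_trans one_pos ht
      rw [Measure.restrict_apply' measurableSet_ball]
      have hsub : {a : E4 | t < ‖a‖ ^ (-β)} ∩ ball 0 1 ⊆ ball (0:E4) (t ^ (-(1/β))) := by
        rintro a ⟨ha, -⟩
        simp only [mem_setOf_eq] at ha
        have hna : 0 < ‖a‖ := by
          rcases eq_or_lt_of_le (norm_nonneg a) with h | h
          · exfalso
            rw [← h, Real.zero_rpow (by linarith : -β ≠ 0)] at ha
            linarith
          · exact h
        have h1 : (‖a‖ ^ (-β)) ^ (-(1/β)) < t ^ (-(1/β)) :=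
          Real.rpow_lt_rpow_of_neg ht0 ha (neg_lt_zero.mpr (by positivity))
        have h2 : (‖a‖ ^ (-β)) ^ (-(1/β)) = ‖a‖ := by
          rw [← Real.rpow_mul (norm_nonneg a)]
          have : -β * -(1/β) = 1 := by field_simp
          rw [this, Real.rpow_one]
        rw [mem_ball, dist_zero_right]
        rw [h2] at h1
        exact h1
      calc volume ({a : E4 | t < ‖a‖ ^ (-β)} ∩ ball 0 1)
          ≤ volume (ball (0:E4) (t ^ (-(1/β)))) := measure_mono hsub
        _ = ENNReal.ofReal ((t ^ (-(1/β))) ^ Module.finrank ℝ E4) * volume (ball (0:E4) 1) :=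
            Measure.addHaar_ball _ _ (Real.rpow_nonneg ht0.le _)
        _ = ENNReal.ofReal (t ^ (-(4/β))) * volume (ball (0:E4) 1) := by
            congr 2
            rw [show Module.finrank ℝ E4 = 4 from finrank_euclideanSpace_fin, ← Real.rpow_natCast
              (t ^ (-(1/β))) 4, ← Real.rpow_mul ht0.le]
            norm_num
            ring_nf
    calc ∫⁻ t in Ioi (1:ℝ), (volume.restrict (ball (0:E4) 1)) {a | t < ‖a‖ ^ (-β)}
        ≤ ∫⁻ t in Ioi (1:ℝ), ENNReal.ofReal (t ^ (-(4/β))) * volume (ball (0:E4) 1) := by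
          apply setLIntegral_mono (by fun_prop) key
      _ = (∫⁻ t in Ioi (1:ℝ), ENNReal.ofReal (t ^ (-(4/β)))) * volume (ball (0:E4) 1) :=
          lintegral_mul_const' _ _ hV.ne
      _ < ⊤ := by
          apply ENNReal.mul_lt_top _ hV
          have hint : IntegrableOn (fun t : ℝ => t ^ (-(4/β))) (Ioi 1) :=
            integrableOn_Ioi_rpow_of_lt (by rw [neg_lt_neg_iff]; exact (one_lt_div hβ0).2 hβ4)
              one_pos
          exact hint.lintegral_lt_top

/-- Integrability of the power at infinity. -/
lemma compl_int {s : ℝ} (hs : 4 < s) :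
    ∫⁻ u : E4 in (ball (0:E4) 1)ᶜ, ENNReal.ofReal (‖u‖ ^ (-s)) < ⊤ := by
  have hs0 : (0:ℝ) < s := by linarith
  have hpt : ∀ u : E4, u ∈ (ball (0:E4) 1)ᶜ →
      ENNReal.ofReal (‖u‖ ^ (-s)) ≤ ENNReal.ofReal ((2:ℝ) ^ s * (1 + ‖u‖) ^ (-s)) := by
    intro u hu
    have h1 : 1 ≤ ‖u‖ := by
      simpa [mem_ball, dist_zero_right] using hu
    apply ENNReal.ofReal_le_ofReal
    have h2 : (1 + ‖u‖) ^ (-s) ≥ (2 * ‖u‖) ^ (-s) :=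
      Real.rpow_le_rpow_of_nonpos (by linarith) (by linarith) (by linarith)
    have h3 : (2 * ‖u‖ : ℝ) ^ (-s) = (2:ℝ) ^ (-s) * ‖u‖ ^ (-s) :=
      Real.mul_rpow (by norm_num) (by linarith)
    have h4 : (2:ℝ) ^ s * ((2:ℝ) ^ (-s) * ‖u‖ ^ (-s)) = ‖u‖ ^ (-s) := by
      rw [← mul_assoc, ← Real.rpow_add (by norm_num : (0:ℝ) < 2)]
      simp
    calc ‖u‖ ^ (-s) = (2:ℝ) ^ s * ((2:ℝ) ^ (-s) * ‖u‖ ^ (-s)) := h4.symm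
      _ = (2:ℝ) ^ s * (2 * ‖u‖) ^ (-s) := by rw [h3]
      _ ≤ (2:ℝ) ^ s * (1 + ‖u‖) ^ (-s) := by
          apply mul_le_mul_of_nonneg_left h2 (by positivity)
  calc ∫⁻ u : E4 in (ball (0:E4) 1)ᶜ, ENNReal.ofReal (‖u‖ ^ (-s))
      ≤ ∫⁻ u : E4 in (ball (0:E4) 1)ᶜ, ENNReal.ofReal ((2:ℝ) ^ s * (1 + ‖u‖) ^ (-s)) :=
        setLIntegral_mono (by fun_prop) hpt
    _ ≤ ∫⁻ u : E4, ENNReal.ofReal ((2:ℝ) ^ s * (1 + ‖u‖) ^ (-s)) :=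
        setLIntegral_le_lintegral _ _
    _ = ENNReal.ofReal ((2:ℝ) ^ s) * ∫⁻ u : E4, ENNReal.ofReal ((1 + ‖u‖) ^ (-s)) := by
        simp_rw [ENNReal.ofReal_mul (by positivity : (0:ℝ) ≤ (2:ℝ) ^ s)]
        exact lintegral_const_mul' _ _ ENNReal.ofReal_ne_top
    _ < ⊤ := by
        apply ENNReal.mul_lt_top ENNReal.ofReal_lt_top
        apply finite_integral_one_add_norm
        rw [show Module.finrank ℝ E4 = 4 from finrank_euclideanSpace_fin]
        exact_mod_cast hs

/-- The comparison integral. -/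
def cInt (δ β : ℝ) : ℝ≥0∞ :=
  ∫⁻ u : E4, ENNReal.ofReal (Real.sqrt (1 + ‖u‖ ^ 2) ^ (-δ) * ‖u‖ ^ (-β))

lemma cInt_lt_top {δ β : ℝ} (hδ : 0 < δ) (hβ0 : 0 < β) (hβ4 : β < 4) (hs : 4 < δ + β) :
    cInt δ β < ⊤ := by
  unfold cInt
  rw [← lintegral_add_compl _ (measurableSet_ball : MeasurableSet (ball (0:E4) 1))]
  apply ENNReal.add_lt_top.2
  constructor
  · calc ∫⁻ u : E4 in ball 0 1,
          ENNReal.ofReal (Real.sqrt (1 + ‖u‖ ^ 2) ^ (-δ) * ‖u‖ ^ (-β))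
        ≤ ∫⁻ u : E4 in ball 0 1, ENNReal.ofReal (‖u‖ ^ (-β)) := by
          apply setLIntegral_mono (by fun_prop)
          intro u _
          apply ENNReal.ofReal_le_ofReal
          calc Real.sqrt (1 + ‖u‖ ^ 2) ^ (-δ) * ‖u‖ ^ (-β)
              ≤ 1 * ‖u‖ ^ (-β) := by
                apply mul_le_mul_of_nonneg_right
                  (Real.rpow_le_one_of_one_le_of_nonpos (one_le_sq u) (by linarith))
                  (Real.rpow_nonneg (norm_nonneg u) _)
            _ = ‖u‖ ^ (-β) := one_mul _
      _ < ⊤ := ball_int hβ0 hβ4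
  · calc ∫⁻ u : E4 in (ball 0 1)ᶜ,
          ENNReal.ofReal (Real.sqrt (1 + ‖u‖ ^ 2) ^ (-δ) * ‖u‖ ^ (-β))
        ≤ ∫⁻ u : E4 in (ball 0 1)ᶜ, ENNReal.ofReal (‖u‖ ^ (-(δ + β))) := by
          apply setLIntegral_mono (by fun_prop)
          intro u hu
          have h1 : 1 ≤ ‖u‖ := by simpa [mem_ball, dist_zero_right] using hu
          apply ENNReal.ofReal_le_ofReal
          have h2 : Real.sqrt (1 + ‖u‖ ^ 2) ^ (-δ) ≤ ‖u‖ ^ (-δ) :=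
            Real.rpow_le_rpow_of_nonpos (by linarith) (norm_le_sq u) (by linarith)
          calc Real.sqrt (1 + ‖u‖ ^ 2) ^ (-δ) * ‖u‖ ^ (-β)
              ≤ ‖u‖ ^ (-δ) * ‖u‖ ^ (-β) :=
                mul_le_mul_of_nonneg_right h2 (Real.rpow_nonneg (norm_nonneg u) _)
            _ = ‖u‖ ^ (-(δ + β)) := by
                rw [← Real.rpow_add (by linarith : (0:ℝ) < ‖u‖)]
                ring_nf
      _ < ⊤ := compl_int hs

/-- Uniform bound for the translated weighted integral. -/
lemma g_le {δ β : ℝ} (hδ : 0 < δ) (hβ0 : 0 < β) (z : E4) :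
    (∫⁻ x₁ : E4, ENNReal.ofReal (Real.sqrt (1 + ‖x₁‖ ^ 2) ^ (-δ) * ‖z - x₁‖ ^ (-β)))
      ≤ 2 * cInt δ β := by
  set S : Set E4 := {x₁ | ‖x₁‖ ≤ ‖z - x₁‖} with hS
  have hSm : MeasurableSet S :=
    measurableSet_le (by fun_prop) (by fun_prop)
  rw [← lintegral_add_compl _ hSm, two_mul]
  apply add_le_add
  · -- on S : ‖x₁‖ ≤ ‖z - x₁‖, bound by function of x₁ only
    calc ∫⁻ x₁ in S, ENNReal.ofReal (Real.sqrt (1 + ‖x₁‖ ^ 2) ^ (-δ) * ‖z - x₁‖ ^ (-β))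
        ≤ ∫⁻ x₁ in S, ENNReal.ofReal (Real.sqrt (1 + ‖x₁‖ ^ 2) ^ (-δ) * ‖x₁‖ ^ (-β)) := by
          apply setLIntegral_mono_ae (by fun_prop)
          have h0 : ∀ᵐ x₁ : E4, x₁ ≠ 0 := by
            rw [ae_iff]
            simpa using measure_singleton (0 : E4)
          filter_upwards [h0] with x₁ hx₁ hx₁S
          apply ENNReal.ofReal_le_ofReal
          apply mul_le_mul_of_nonneg_left _ (Real.rpow_nonneg (Real.sqrt_nonneg _) _)
          exact Real.rpow_le_rpow_of_nonpos (norm_pos_iff.2 hx₁) hx₁S (by linarith)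
      _ ≤ cInt δ β := setLIntegral_le_lintegral _ _
  · -- on Sᶜ : ‖z - x₁‖ < ‖x₁‖, bound by function of z - x₁ only
    calc ∫⁻ x₁ in Sᶜ, ENNReal.ofReal (Real.sqrt (1 + ‖x₁‖ ^ 2) ^ (-δ) * ‖z - x₁‖ ^ (-β))
        ≤ ∫⁻ x₁ in Sᶜ,
            ENNReal.ofReal (Real.sqrt (1 + ‖z - x₁‖ ^ 2) ^ (-δ) * ‖z - x₁‖ ^ (-β)) := by
          apply setLIntegral_mono (by fun_prop)
          intro x₁ hx₁
          have hlt : ‖z - x₁‖ < ‖x₁‖ := by simpa [hS] using hx₁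
          apply ENNReal.ofReal_le_ofReal
          apply mul_le_mul_of_nonneg_right _ (Real.rpow_nonneg (norm_nonneg _) _)
          apply Real.rpow_le_rpow_of_nonpos _ _ (by linarith)
          · positivity
          · exact Real.sqrt_le_sqrt (by nlinarith [norm_nonneg (z - x₁), norm_nonneg x₁])
      _ ≤ ∫⁻ x₁ : E4,
            ENNReal.ofReal (Real.sqrt (1 + ‖z - x₁‖ ^ 2) ^ (-δ) * ‖z - x₁‖ ^ (-β)) :=
          setLIntegral_le_lintegral _ _
      _ = cInt δ β :=
          (Measure.measurePreserving_sub_left (volume : Measure E4) z).lintegral_comp (meas0 δ β)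

/-- Main splitting estimate. -/
lemma main_est {δ a b : ℝ} (hδ : 0 < δ) (hb0 : 0 < b) (hba : b ≤ a)
    (x y : E4) (hxy : x ≠ y) :
    (∫⁻ x₁ : E4, ENNReal.ofReal
        (Real.sqrt (1 + ‖x₁‖ ^ 2) ^ (-δ) * ‖x - x₁‖ ^ (-a) * ‖x₁ - y‖ ^ (-b)))
      ≤ ENNReal.ofReal ((2:ℝ) ^ b * ‖x - y‖ ^ (-b)) * (4 * cInt δ a) := by
  have ha0 : 0 < a := lt_of_lt_of_le hb0 hba
  have hxy0 : 0 < ‖x - y‖ := by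
    rw [norm_pos_iff, sub_ne_zero]; exact hxy
  set K : ℝ := (2:ℝ) ^ b * ‖x - y‖ ^ (-b) with hK
  have hK0 : 0 ≤ K := by positivity
  set S : Set E4 := {x₁ | ‖x - x₁‖ ≤ ‖x₁ - y‖} with hS
  have hSm : MeasurableSet S :=
    measurableSet_le (by fun_prop) (by fun_prop)
  rw [← lintegral_add_compl _ hSm]
  have htri : ∀ x₁ : E4, ‖x - y‖ ≤ ‖x - x₁‖ + ‖x₁ - y‖ := fun x₁ => by
    simpa [dist_eq_norm] using dist_triangle x x₁ y
  have key1 : ∫⁻ x₁ in S, ENNReal.ofReal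
      (Real.sqrt (1 + ‖x₁‖ ^ 2) ^ (-δ) * ‖x - x₁‖ ^ (-a) * ‖x₁ - y‖ ^ (-b))
      ≤ ENNReal.ofReal K * (2 * cInt δ a) := by
    calc ∫⁻ x₁ in S, ENNReal.ofReal
          (Real.sqrt (1 + ‖x₁‖ ^ 2) ^ (-δ) * ‖x - x₁‖ ^ (-a) * ‖x₁ - y‖ ^ (-b))
        ≤ ∫⁻ x₁ in S, ENNReal.ofReal K *
            ENNReal.ofReal (Real.sqrt (1 + ‖x₁‖ ^ 2) ^ (-δ) * ‖x - x₁‖ ^ (-a)) := by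
          apply setLIntegral_mono ((meas1 δ a x).const_mul _)
          intro x₁ hx₁
          have hle : ‖x - x₁‖ ≤ ‖x₁ - y‖ := hx₁
          have hy0 : 0 < ‖x₁ - y‖ := by
            rcases eq_or_lt_of_le (norm_nonneg (x₁ - y)) with h | h
            · exfalso
              have hxx : ‖x - x₁‖ ≤ 0 := by rw [← h] at hle; exact hle
              have h1 : x = x₁ := by
                rwa [← sub_eq_zero, ← norm_le_zero_iff]
              have h2 : x₁ = y := by
                have := h.symm
                rwa [norm_eq_zero, sub_eq_zero] at this
              exact hxy (h1.trans h2)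
            · exact h
          have hhalf : ‖x - y‖ / 2 ≤ ‖x₁ - y‖ := by
            have := htri x₁; linarith
          have hb1 : ‖x₁ - y‖ ^ (-b) ≤ (‖x - y‖ / 2) ^ (-b) :=
            Real.rpow_le_rpow_of_nonpos (by positivity) hhalf (by linarith)
          have hb2 : (‖x - y‖ / 2) ^ (-b) = K := by
            rw [hK, Real.div_rpow (norm_nonneg _) (by norm_num), Real.rpow_neg (by norm_num : (0:ℝ) ≤ 2)]
            field_simp
          rw [← ENNReal.ofReal_mul hK0]
          apply ENNReal.ofReal_le_ofReal
          have hw0 : 0 ≤ Real.sqrt (1 + ‖x₁‖ ^ 2) ^ (-δ) * ‖x - x₁‖ ^ (-a) := by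
            apply mul_nonneg (Real.rpow_nonneg (Real.sqrt_nonneg _) _)
              (Real.rpow_nonneg (norm_nonneg _) _)
          calc Real.sqrt (1 + ‖x₁‖ ^ 2) ^ (-δ) * ‖x - x₁‖ ^ (-a) * ‖x₁ - y‖ ^ (-b)
              ≤ Real.sqrt (1 + ‖x₁‖ ^ 2) ^ (-δ) * ‖x - x₁‖ ^ (-a) * K := by
                apply mul_le_mul_of_nonneg_left _ hw0
                rw [← hb2]; exact hb1
            _ = K * (Real.sqrt (1 + ‖x₁‖ ^ 2) ^ (-δ) * ‖x - x₁‖ ^ (-a)) := by ring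
      _ = ENNReal.ofReal K * ∫⁻ x₁ in S,
            ENNReal.ofReal (Real.sqrt (1 + ‖x₁‖ ^ 2) ^ (-δ) * ‖x - x₁‖ ^ (-a)) :=
          lintegral_const_mul' _ _ ENNReal.ofReal_ne_top
      _ ≤ ENNReal.ofReal K * (2 * cInt δ a) := by
          apply mul_le_mul_right
          calc ∫⁻ x₁ in S, ENNReal.ofReal (Real.sqrt (1 + ‖x₁‖ ^ 2) ^ (-δ) * ‖x - x₁‖ ^ (-a))
              ≤ ∫⁻ x₁ : E4, ENNReal.ofReal
                  (Real.sqrt (1 + ‖x₁‖ ^ 2) ^ (-δ) * ‖x - x₁‖ ^ (-a)) :=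
                setLIntegral_le_lintegral _ _
            _ ≤ 2 * cInt δ a := g_le hδ ha0 x
  have key2 : ∫⁻ x₁ in Sᶜ, ENNReal.ofReal
      (Real.sqrt (1 + ‖x₁‖ ^ 2) ^ (-δ) * ‖x - x₁‖ ^ (-a) * ‖x₁ - y‖ ^ (-b))
      ≤ ENNReal.ofReal K * (2 * cInt δ a) := by
    calc ∫⁻ x₁ in Sᶜ, ENNReal.ofReal
          (Real.sqrt (1 + ‖x₁‖ ^ 2) ^ (-δ) * ‖x - x₁‖ ^ (-a) * ‖x₁ - y‖ ^ (-b))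
        ≤ ∫⁻ x₁ in Sᶜ, ENNReal.ofReal K *
            ENNReal.ofReal (Real.sqrt (1 + ‖x₁‖ ^ 2) ^ (-δ) * ‖y - x₁‖ ^ (-a)) := by
          apply setLIntegral_mono ((meas1 δ a y).const_mul _)
          intro x₁ hx₁
          have hlt : ‖x₁ - y‖ < ‖x - x₁‖ := by
            simpa [hS] using hx₁
          rw [← ENNReal.ofReal_mul hK0]
          apply ENNReal.ofReal_le_ofReal
          have hw0 : 0 ≤ Real.sqrt (1 + ‖x₁‖ ^ 2) ^ (-δ) :=
            Real.rpow_nonneg (Real.sqrt_nonneg _) _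
          rw [norm_sub_rev y x₁]
          rcases eq_or_ne x₁ y with h | h
          · subst h
            rw [sub_self, norm_zero, Real.zero_rpow (by linarith : -b ≠ 0), mul_zero]
            positivity
          · have hy0 : 0 < ‖x₁ - y‖ := by
              rw [norm_pos_iff, sub_ne_zero]; exact h
            have hxx0 : 0 < ‖x - x₁‖ := lt_trans hy0 hlt
            have hhalf : ‖x - y‖ / 2 ≤ ‖x - x₁‖ := by
              have := htri x₁; linarith
            have hb1 : ‖x - x₁‖ ^ (-b) ≤ K := by
              have h1 : ‖x - x₁‖ ^ (-b) ≤ (‖x - y‖ / 2) ^ (-b) :=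
                Real.rpow_le_rpow_of_nonpos (by positivity) hhalf (by linarith)
              have hb2 : (‖x - y‖ / 2) ^ (-b) = K := by
                rw [hK, Real.div_rpow (norm_nonneg _) (by norm_num),
                  Real.rpow_neg (by norm_num : (0:ℝ) ≤ 2)]
                field_simp
              rw [← hb2]; exact h1
            have hsplit : ‖x - x₁‖ ^ (-a) = ‖x - x₁‖ ^ (-b) * ‖x - x₁‖ ^ (-(a - b)) := by
              rw [← Real.rpow_add hxx0]; ring_nf
            have hmid : ‖x - x₁‖ ^ (-(a - b)) ≤ ‖x₁ - y‖ ^ (-(a - b)) :=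
              Real.rpow_le_rpow_of_nonpos hy0 hlt.le (by linarith)
            have hcollect : ‖x₁ - y‖ ^ (-(a - b)) * ‖x₁ - y‖ ^ (-b) = ‖x₁ - y‖ ^ (-a) := by
              rw [← Real.rpow_add hy0]; ring_nf
            calc Real.sqrt (1 + ‖x₁‖ ^ 2) ^ (-δ) * ‖x - x₁‖ ^ (-a) * ‖x₁ - y‖ ^ (-b)
                = Real.sqrt (1 + ‖x₁‖ ^ 2) ^ (-δ) *
                    (‖x - x₁‖ ^ (-b) * (‖x - x₁‖ ^ (-(a - b)) * ‖x₁ - y‖ ^ (-b))) := by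
                  rw [hsplit]; ring
              _ ≤ Real.sqrt (1 + ‖x₁‖ ^ 2) ^ (-δ) *
                    (K * (‖x₁ - y‖ ^ (-(a - b)) * ‖x₁ - y‖ ^ (-b))) := by
                  apply mul_le_mul_of_nonneg_left _ hw0
                  apply mul_le_mul hb1
                  · apply mul_le_mul_of_nonneg_right hmid
                      (Real.rpow_nonneg (norm_nonneg _) _)
                  · positivity
                  · exact hK0
              _ = K * (Real.sqrt (1 + ‖x₁‖ ^ 2) ^ (-δ) * ‖x₁ - y‖ ^ (-a)) := by
                  rw [hcollect]; ring
      _ = ENNReal.ofReal K * ∫⁻ x₁ in Sᶜ,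
            ENNReal.ofReal (Real.sqrt (1 + ‖x₁‖ ^ 2) ^ (-δ) * ‖y - x₁‖ ^ (-a)) :=
          lintegral_const_mul' _ _ ENNReal.ofReal_ne_top
      _ ≤ ENNReal.ofReal K * (2 * cInt δ a) := by
          apply mul_le_mul_right
          calc ∫⁻ x₁ in Sᶜ, ENNReal.ofReal (Real.sqrt (1 + ‖x₁‖ ^ 2) ^ (-δ) * ‖y - x₁‖ ^ (-a))
              ≤ ∫⁻ x₁ : E4, ENNReal.ofReal
                  (Real.sqrt (1 + ‖x₁‖ ^ 2) ^ (-δ) * ‖y - x₁‖ ^ (-a)) :=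
                setLIntegral_le_lintegral _ _
            _ ≤ 2 * cInt δ a := g_le hδ ha0 y
  calc (∫⁻ x₁ in S, ENNReal.ofReal
        (Real.sqrt (1 + ‖x₁‖ ^ 2) ^ (-δ) * ‖x - x₁‖ ^ (-a) * ‖x₁ - y‖ ^ (-b))) +
      ∫⁻ x₁ in Sᶜ, ENNReal.ofReal
        (Real.sqrt (1 + ‖x₁‖ ^ 2) ^ (-δ) * ‖x - x₁‖ ^ (-a) * ‖x₁ - y‖ ^ (-b))
      ≤ ENNReal.ofReal K * (2 * cInt δ a) + ENNReal.ofReal K * (2 * cInt δ a) :=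
        add_le_add key1 key2
    _ = ENNReal.ofReal K * (4 * cInt δ a) := by
        rw [← mul_add]
        congr 1
        rw [← add_mul]
        norm_num

end Stmt19Aux

open Stmt19Aux

theorem stmt19 (δ : ℝ) (hδ : 7/2 < δ) :
    ∃ C : ℝ, 0 < C ∧ ∀ x y : EuclideanSpace ℝ (Fin 4), x ≠ y →
      ((∫⁻ x₁, ENNReal.ofReal
          (Real.sqrt (1 + ‖x₁‖ ^ 2) ^ (-δ) * ‖x - x₁‖ ^ (-(3 : ℝ)) * ‖x₁ - y‖ ^ (-(2 : ℝ))))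
        ≤ ENNReal.ofReal (C * ‖x - y‖ ^ (-(2 : ℝ)))) ∧
      ((∫⁻ x₁, ENNReal.ofReal
          (Real.sqrt (1 + ‖x₁‖ ^ 2) ^ (-δ) * ‖x - x₁‖ ^ (-(3/2 : ℝ)) * ‖x₁ - y‖ ^ (-(1/2 : ℝ))))
        ≤ ENNReal.ofReal (C * ‖x - y‖ ^ (-(1/2 : ℝ)))) := by
  have hδ0 : 0 < δ := by linarith
  have hc3 : cInt δ 3 < ⊤ := cInt_lt_top hδ0 (by norm_num) (by norm_num) (by linarith)
  have hch : cInt δ (3/2) < ⊤ := cInt_lt_top hδ0 (by norm_num) (by norm_num) (by linarith)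
  set T3 : ℝ := (4 * cInt δ 3).toReal with hT3
  set Th : ℝ := (4 * cInt δ (3/2)).toReal with hTh
  have hT3nn : 0 ≤ T3 := ENNReal.toReal_nonneg
  have hThnn : 0 ≤ Th := ENNReal.toReal_nonneg
  have hT3eq : (4 : ℝ≥0∞) * cInt δ 3 = ENNReal.ofReal T3 := by
    rw [hT3, ENNReal.ofReal_toReal]
    exact (ENNReal.mul_lt_top (by norm_num) hc3).ne
  have hTheq : (4 : ℝ≥0∞) * cInt δ (3/2) = ENNReal.ofReal Th := by
    rw [hTh, ENNReal.ofReal_toReal]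
    exact (ENNReal.mul_lt_top (by norm_num) hch).ne
  refine ⟨4 * (T3 + Th) + 1, by positivity, fun x y hxy => ?_⟩
  have hxy0 : 0 < ‖x - y‖ := by rw [norm_pos_iff, sub_ne_zero]; exact hxy
  constructor
  · calc (∫⁻ x₁, ENNReal.ofReal
          (Real.sqrt (1 + ‖x₁‖ ^ 2) ^ (-δ) * ‖x - x₁‖ ^ (-(3 : ℝ)) * ‖x₁ - y‖ ^ (-(2 : ℝ))))
        ≤ ENNReal.ofReal ((2:ℝ) ^ (2:ℝ) * ‖x - y‖ ^ (-(2:ℝ))) * (4 * cInt δ 3) :=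
          main_est hδ0 (by norm_num) (by norm_num) x y hxy
      _ ≤ ENNReal.ofReal ((4 * (T3 + Th) + 1) * ‖x - y‖ ^ (-(2 : ℝ))) := by
          rw [hT3eq, ← ENNReal.ofReal_mul (by positivity)]
          apply ENNReal.ofReal_le_ofReal
          have h2 : (2:ℝ) ^ (2:ℝ) = 4 := by
            rw [show (2:ℝ) = ((2:ℕ):ℝ) by norm_num, Real.rpow_natCast]
            norm_num
          rw [h2]
          have hp : (0:ℝ) ≤ ‖x - y‖ ^ (-(2:ℝ)) := Real.rpow_nonneg (norm_nonneg _) _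
          nlinarith [hp, hT3nn, hThnn]
  · calc (∫⁻ x₁, ENNReal.ofReal
          (Real.sqrt (1 + ‖x₁‖ ^ 2) ^ (-δ) * ‖x - x₁‖ ^ (-(3/2 : ℝ)) * ‖x₁ - y‖ ^ (-(1/2 : ℝ))))
        ≤ ENNReal.ofReal ((2:ℝ) ^ ((1:ℝ)/2) * ‖x - y‖ ^ (-(1/2:ℝ))) * (4 * cInt δ (3/2)) := by
          have := main_est (δ := δ) (a := 3/2) (b := 1/2) hδ0 (by norm_num) (by norm_num) x y hxy
          convert this using 4
      _ ≤ ENNReal.ofReal ((4 * (T3 + Th) + 1) * ‖x - y‖ ^ (-(1/2 : ℝ))) := by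
          rw [hTheq, ← ENNReal.ofReal_mul (by positivity)]
          apply ENNReal.ofReal_le_ofReal
          have h2 : (2:ℝ) ^ ((1:ℝ)/2) ≤ 4 := by
            calc (2:ℝ) ^ ((1:ℝ)/2) ≤ (2:ℝ) ^ (2:ℝ) :=
              Real.rpow_le_rpow_of_exponent_le (by norm_num) (by norm_num)
            _ = 4 := by
              rw [show (2:ℝ) = ((2:ℕ):ℝ) by norm_num, Real.rpow_natCast]
              norm_num
          have hp : (0:ℝ) ≤ ‖x - y‖ ^ (-(1/2:ℝ)) := Real.rpow_nonneg (norm_nonneg _) _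
          nlinarith [mul_le_mul_of_nonneg_right (mul_le_mul_of_nonneg_right h2 hThnn) hp,
            mul_nonneg hp hT3nn, hp]
end
end
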